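/- Let g, f_1,...,f_s ∈ k[x_1,...,x_n] with g ∈ (f_1,...,f_s), and let D ≥ 0 be an integer. Then there exist a_1,...,a_s ∈ k[x_1,...,x_n] with g = a_1 f_1 + ... + a_s f_s and deg(a_i f_i) ≤ deg g + D for all i, if and only if x_0^D · g̃ ∈ (f̃_1,...,f̃_s) ⊆ k[x_0,...,x_n], where g̃, f̃_i denote homogenizations with respect to the new variable x_0. -/
import Mathlib


open MvPolynomial

/-- Integer-valued binomial coefficient `C(a, b)`, zero when `a < 0` or `a < b`. -/
def ichoose (a : ℤ) (b : ℕ) : ℤ := if a < 0 then 0 else (a.toNat).choose b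

/-- The Hilbert function of a (homogeneous) ideal `I ⊆ k[x₀, …, xₙ]`:
`m ↦ dim_k (k[x₀, …, xₙ]/I)_m`. -/
noncomputable def hilbF (k : Type*) [Field k] {n : ℕ}
    (I : Ideal (MvPolynomial (Fin (n+1)) k)) (m : ℕ) : ℕ :=
  Module.finrank k ((homogeneousSubmodule (Fin (n+1)) k m).map
    (Ideal.Quotient.mkₐ k I).toLinearMap)

open scoped Classical in
/-- The Hilbert polynomial of `I` (the polynomial agreeing with the Hilbert
function for all large `m`; junk value `0` if none exists). -/
noncomputable def hilbP (k : Type*) [Field k] {n : ℕ}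
    (I : Ideal (MvPolynomial (Fin (n+1)) k)) : Polynomial ℚ :=
  if h : ∃ P : Polynomial ℚ, ∀ᶠ m : ℕ in Filter.atTop,
      (hilbF k I m : ℚ) = P.eval (m : ℚ) then h.choose else 0

/-- The (algebraic) degree of a homogeneous ideal `I` of projective dimension
`d ≥ 0`: `d! · (leading coefficient of its Hilbert polynomial)`. -/
noncomputable def idealDeg (k : Type*) [Field k] {n : ℕ}
    (I : Ideal (MvPolynomial (Fin (n+1)) k)) : ℕ :=
  ⌊((hilbP k I).natDegree.factorial : ℚ) * (hilbP k I).leadingCoeff⌋₊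

/-- The projective dimension of a homogeneous ideal `I` (of dimension `≥ 0`):
the degree of its Hilbert polynomial. -/
noncomputable def idealDim (k : Type*) [Field k] {n : ℕ}
    (I : Ideal (MvPolynomial (Fin (n+1)) k)) : ℕ :=
  (hilbP k I).natDegree

/-- A homogeneous ideal: one containing all homogeneous components of its elements. -/
def IsHomogeneousIdeal {k : Type*} [Field k] {n : ℕ}
    (I : Ideal (MvPolynomial (Fin (n+1)) k)) : Prop :=
  ∀ f ∈ I, ∀ m : ℕ, homogeneousComponent m f ∈ I

/-- `I` is unmixed of projective dimension `d`: every associated prime `P` of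
`k[x₀,…,xₙ]/I` satisfies `dim k[x₀,…,xₙ]/P = d + 1` (affine Krull dimension). -/
def IsUnmixed (k : Type*) [Field k] {n : ℕ}
    (I : Ideal (MvPolynomial (Fin (n+1)) k)) (d : ℕ) : Prop :=
  ∀ P ∈ associatedPrimes (MvPolynomial (Fin (n+1)) k)
      (MvPolynomial (Fin (n+1)) k ⧸ I),
    ringKrullDim (MvPolynomial (Fin (n+1)) k ⧸ P) = ((d + 1 : ℕ) : WithBot (WithTop ℕ))

/-- The homogenization of an affine polynomial `f ∈ k[x₁,…,xₙ]` with respect to a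
new variable `x₀`: the homogeneous polynomial of degree `deg f` with
`f̃(1, x₁, …, xₙ) = f`. -/
noncomputable def homogenize {k : Type*} [Field k] {n : ℕ}
    (f : MvPolynomial (Fin n) k) : MvPolynomial (Fin (n+1)) k :=
  ∑ v ∈ f.support,
    monomial (Finsupp.cons (f.totalDegree - v.sum fun _ e => e) v) (f.coeff v)

section Aux
variable {k : Type*} [Field k] {n m : ℕ}

lemma degree_fin (u : Fin m →₀ ℕ) : u.degree = ∑ i, u i := by
  rw [Finsupp.degree]
  exact Finset.sum_subset (Finset.subset_univ _) (by simp +contextual [Finsupp.notMem_support_iff])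

lemma degree_succ (u : Fin (n+1) →₀ ℕ) : u.degree = u 0 + (Finsupp.tail u).degree := by
  rw [degree_fin, degree_fin, Fin.sum_univ_succ]
  simp [Finsupp.tail_apply]

lemma degree_cons' (a : ℕ) (v : Fin n →₀ ℕ) : (Finsupp.cons a v).degree = a + v.degree := by
  rw [degree_succ, Finsupp.cons_zero, Finsupp.tail_cons]

noncomputable def dehom {k : Type*} [Field k] {n : ℕ} :
    MvPolynomial (Fin (n+1)) k →ₐ[k] MvPolynomial (Fin n) k :=
  aeval (Fin.cases 1 X)

lemma dehom_monomial (u : Fin (n+1) →₀ ℕ) (c : k) :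
    dehom (monomial u c) = monomial (Finsupp.tail u) c := by
  rw [dehom, aeval_monomial, monomial_eq]
  congr 1
  rw [Finsupp.prod_pow, Finsupp.prod_pow, Fin.prod_univ_succ]
  simp [Finsupp.tail_apply]



lemma dehom_homogenize (p : MvPolynomial (Fin n) k) : dehom (homogenize p) = p := by
  rw [homogenize, map_sum]
  simp_rw [dehom_monomial, Finsupp.tail_cons]
  exact p.support_sum_monomial_coeff

lemma homogenize_isHomogeneous (p : MvPolynomial (Fin n) k) :
    (homogenize p).IsHomogeneous p.totalDegree := by
  apply MvPolynomial.IsHomogeneous.sum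
  intro v hv
  apply isHomogeneous_monomial
  rw [degree_cons']
  have h1 : (v.sum fun _ e => e) ≤ p.totalDegree := le_totalDegree hv
  have h2 : (v.sum fun _ e => e) = v.degree := rfl
  omega

lemma dehom_eq_zero {F : MvPolynomial (Fin (n+1)) k} (hF : F.IsHomogeneous m)
    (h : dehom F = 0) : F = 0 := by
  by_contra hne
  obtain ⟨u₀, hu₀⟩ := (MvPolynomial.support_nonempty.2 hne)
  have hdeg : ∀ u ∈ F.support, u.degree = m := by
    intro u hu
    by_contra hc
    exact (MvPolynomial.mem_support_iff.1 hu) (hF.coeff_eq_zero hc)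
  have : coeff (Finsupp.tail u₀) (dehom F) = coeff u₀ F := by
    conv_lhs => rw [← F.support_sum_monomial_coeff, map_sum]
    simp_rw [dehom_monomial, coeff_sum, coeff_monomial]
    rw [Finset.sum_eq_single u₀]
    · rw [if_pos rfl]
    · intro u hu hne'
      rw [if_neg]
      intro htail
      apply hne'
      have : Finsupp.cons (u 0) (Finsupp.tail u) = Finsupp.cons (u₀ 0) (Finsupp.tail u₀) := by
        rw [htail]
        congr 1
        have d1 := degree_succ u
        have d2 := degree_succ u₀
        rw [hdeg u hu] at d1; rw [hdeg u₀ hu₀] at d2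
        rw [htail] at d1
        omega
      rwa [Finsupp.cons_tail, Finsupp.cons_tail] at this
    · intro h'; exact absurd hu₀ h'
  rw [h, coeff_zero] at this
  exact (MvPolynomial.mem_support_iff.1 hu₀) this.symm

lemma dehom_inj {F G : MvPolynomial (Fin (n+1)) k} (hF : F.IsHomogeneous m)
    (hG : G.IsHomogeneous m) (h : dehom F = dehom G) : F = G := by
  have := dehom_eq_zero (m := m) (hF.sub hG) (by rw [map_sub, h, sub_self])
  linear_combination (norm := ring_nf) this

lemma totalDegree_dehom_le (p : MvPolynomial (Fin (n+1)) k) :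
    (dehom p).totalDegree ≤ p.totalDegree := by
  conv_lhs => rw [← p.support_sum_monomial_coeff, map_sum]
  refine (totalDegree_finset_sum _ _).trans (Finset.sup_le fun u hu => ?_)
  rw [dehom_monomial]
  refine (totalDegree_monomial_le _ _).trans (le_trans ?_ (le_totalDegree hu))
  have h3 := degree_succ u
  calc ((Finsupp.tail u).sum fun _ e => e) = (Finsupp.tail u).degree := rfl
    _ ≤ u.degree := by omega
    _ = u.sum fun _ e => e := rfl

lemma hc_totalDegree_ne_zero {p : MvPolynomial (Fin n) k} (hp : p ≠ 0) :
    homogeneousComponent p.totalDegree p ≠ 0 := by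
  obtain ⟨u, hu, hdeg⟩ := Finset.exists_mem_eq_sup _ (MvPolynomial.support_nonempty.2 hp)
      (fun s => s.sum fun _ e => e)
  intro h
  have := coeff_homogeneousComponent (σ := Fin n) (R := k) p.totalDegree p u
  rw [h, coeff_zero, if_pos (by rw [totalDegree, hdeg]; rfl)] at this
  exact (MvPolynomial.mem_support_iff.1 hu) this.symm

lemma add_totalDegree_le_mul {a b : MvPolynomial (Fin n) k} (ha : a ≠ 0) (hb : b ≠ 0) :
    a.totalDegree + b.totalDegree ≤ (a * b).totalDegree := by
  set da := a.totalDegree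
  set db := b.totalDegree
  have key : homogeneousComponent (da + db) (a * b) =
      homogeneousComponent da a * homogeneousComponent db b := by
    conv_lhs => rw [← sum_homogeneousComponent a, ← sum_homogeneousComponent b,
      Finset.sum_mul_sum, map_sum]
    rw [Finset.sum_eq_single da]
    · rw [map_sum, Finset.sum_eq_single db]
      · rw [homogeneousComponent_of_mem
          (((homogeneousComponent_mem da a).mul (homogeneousComponent_mem db b)) : _ ∈ _), if_pos rfl]
      · intro j hj hne
        rw [homogeneousComponent_of_mem
          (((homogeneousComponent_mem da a).mul (homogeneousComponent_mem j b)) : _ ∈ _),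
          if_neg (by omega)]
      · intro h; exact absurd (Finset.self_mem_range_succ db) h
    · intro i hi hne
      rw [map_sum, Finset.sum_eq_zero]
      intro j hj
      rw [homogeneousComponent_of_mem
        (((homogeneousComponent_mem i a).mul (homogeneousComponent_mem j b)) : _ ∈ _),
        if_neg (by simp only [Finset.mem_range] at hi hj; omega)]
    · intro h; exact absurd (Finset.self_mem_range_succ da) h
  have hne : homogeneousComponent (da + db) (a * b) ≠ 0 := by
    rw [key]
    exact mul_ne_zero (hc_totalDegree_ne_zero ha) (hc_totalDegree_ne_zero hb)
  by_contra hlt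
  push_neg at hlt
  exact hne (homogeneousComponent_eq_zero _ _ (by omega))

lemma hc_mul_homog {e M : ℕ} {F : MvPolynomial (Fin (n+1)) k} (hF : F.IsHomogeneous e)
    (B : MvPolynomial (Fin (n+1)) k) :
    homogeneousComponent M (B * F) =
      (if e ≤ M then homogeneousComponent (M - e) B else 0) * F := by
  conv_lhs => rw [← sum_homogeneousComponent B, Finset.sum_mul, map_sum]
  have hterm : ∀ j, homogeneousComponent M (homogeneousComponent j B * F) =
      if M = j + e then homogeneousComponent j B * F else 0 := fun j =>
    homogeneousComponent_of_mem (((homogeneousComponent_mem j B).mul hF) : _ ∈ _)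
  simp_rw [hterm]
  by_cases hle : e ≤ M
  · rw [Finset.sum_eq_single (M - e)]
    · rw [if_pos (by omega), if_pos hle]
    · intro j hj hne; rw [if_neg (by omega)]
    · intro h
      rw [Finset.mem_range, not_lt] at h
      rw [if_pos (by omega), homogeneousComponent_eq_zero _ _ (by omega), zero_mul]
  · rw [Finset.sum_eq_zero, if_neg hle, zero_mul]
    intro j hj; rw [if_neg (by omega)]

lemma homogenize_zero : homogenize (0 : MvPolynomial (Fin n) k) = 0 := by
  simp [homogenize]

lemma dehom_X0 : dehom (X 0 : MvPolynomial (Fin (n+1)) k) = 1 := by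
  rw [dehom, aeval_X]
  rfl

end Aux



/-- `g ∈ (f₁,…,f_s)` admits a representation `g = ∑ aᵢ fᵢ` with
`deg (aᵢ fᵢ) ≤ deg g + D` if and only if `x₀^D · g̃ ∈ (f̃₁,…,f̃_s)` in
`k[x₀,…,xₙ]`, where `~` denotes homogenization with respect to `x₀`. -/
theorem membership_degree_bound_iff_homogenized {k : Type*} [Field k] {n s D : ℕ}
    (g : MvPolynomial (Fin n) k) (f : Fin s → MvPolynomial (Fin n) k)
    (hg : g ∈ Ideal.span (Set.range f)) :
    (∃ a : Fin s → MvPolynomial (Fin n) k, g = ∑ i, a i * f i ∧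
        ∀ i, (a i * f i).totalDegree ≤ g.totalDegree + D) ↔
      X 0 ^ D * homogenize g ∈
        Ideal.span (Set.range fun i => homogenize (f i)) := by
  have hXg : (X 0 ^ D * homogenize g : MvPolynomial (Fin (n+1)) k).IsHomogeneous
      (g.totalDegree + D) := by
    have h := (isHomogeneous_X_pow (0 : Fin (n+1)) D (R := k)).mul (homogenize_isHomogeneous g)
    rwa [Nat.add_comm D g.totalDegree] at h
  have hdXg : dehom (X 0 ^ D * homogenize g) = g := by
    rw [map_mul, map_pow, dehom_X0, one_pow, one_mul, dehom_homogenize]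
  constructor
  · rintro ⟨a, hrep, hdeg⟩
    set H : MvPolynomial (Fin (n+1)) k :=
      ∑ i, X 0 ^ (g.totalDegree + D - ((a i).totalDegree + (f i).totalDegree)) *
        (homogenize (a i) * homogenize (f i)) with hH
    have hHmem : H ∈ Ideal.span (Set.range fun i => homogenize (f i)) := by
      refine Ideal.sum_mem _ fun i _ => ?_
      rw [← mul_assoc]
      exact Ideal.mul_mem_left _ _ (Ideal.subset_span ⟨i, rfl⟩)
    have hHhom : H.IsHomogeneous (g.totalDegree + D) := by
      refine MvPolynomial.IsHomogeneous.sum _ _ _ fun i _ => ?_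
      rcases eq_or_ne (a i * f i) 0 with h0 | h0
      · rcases mul_eq_zero.1 h0 with h | h <;>
          · rw [h, homogenize_zero]
            simpa using isHomogeneous_zero _ _ _
      · have ha : a i ≠ 0 := fun h => h0 (by rw [h, zero_mul])
        have hf : f i ≠ 0 := fun h => h0 (by rw [h, mul_zero])
        have hmul := add_totalDegree_le_mul ha hf
        have hle := hdeg i
        have key : (g.totalDegree + D - ((a i).totalDegree + (f i).totalDegree)) +
            ((a i).totalDegree + (f i).totalDegree) = g.totalDegree + D := by omega
        have h5 := (isHomogeneous_X_pow (0 : Fin (n+1))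
            (g.totalDegree + D - ((a i).totalDegree + (f i).totalDegree)) (R := k)).mul
          ((homogenize_isHomogeneous (a i)).mul (homogenize_isHomogeneous (f i)))
        rwa [key] at h5
    have hdehom : dehom H = g := by
      rw [hH, map_sum, hrep]
      refine Finset.sum_congr rfl fun i _ => ?_
      rw [map_mul, map_mul, map_pow, dehom_X0, one_pow, one_mul,
        dehom_homogenize, dehom_homogenize]
    have : X 0 ^ D * homogenize g = H :=
      dehom_inj hXg hHhom (by rw [hdXg, hdehom])
    rw [this]
    exact hHmem
  · intro hmem
    obtain ⟨c, hc⟩ := (Submodule.mem_span_range_iff_exists_fun _).1 hmem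
    simp_rw [smul_eq_mul] at hc
    have hkey : X 0 ^ D * homogenize g =
        ∑ i, (if (f i).totalDegree ≤ g.totalDegree + D then
          homogeneousComponent (g.totalDegree + D - (f i).totalDegree) (c i) else 0) *
          homogenize (f i) := by
      calc X 0 ^ D * homogenize g
          = homogeneousComponent (g.totalDegree + D) (X 0 ^ D * homogenize g) := by
            rw [homogeneousComponent_of_mem ((mem_homogeneousSubmodule _ _).2 hXg),
              if_pos rfl]
        _ = homogeneousComponent (g.totalDegree + D) (∑ i, c i * homogenize (f i)) := by
            rw [hc]
        _ = ∑ i, homogeneousComponent (g.totalDegree + D) (c i * homogenize (f i)) :=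
            map_sum _ _ _
        _ = _ := Finset.sum_congr rfl fun i _ =>
            hc_mul_homog (homogenize_isHomogeneous (f i)) (c i)
    set a : Fin s → MvPolynomial (Fin n) k := fun i =>
      dehom (if (f i).totalDegree ≤ g.totalDegree + D then
        homogeneousComponent (g.totalDegree + D - (f i).totalDegree) (c i) else 0) with ha
    refine ⟨a, ?_, ?_⟩
    · have h2 := congrArg dehom hkey
      rw [hdXg, map_sum] at h2
      simp only [ha]
      exact h2.trans (Finset.sum_congr rfl fun i _ => by rw [map_mul, dehom_homogenize])
    · intro i
      simp only [ha]
      by_cases hfi : (f i).totalDegree ≤ g.totalDegree + D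
      · refine (totalDegree_mul _ _).trans ?_
        have h1 : (dehom (if (f i).totalDegree ≤ g.totalDegree + D then
            homogeneousComponent (g.totalDegree + D - (f i).totalDegree) (c i) else 0)).totalDegree
            ≤ g.totalDegree + D - (f i).totalDegree := by
          refine (totalDegree_dehom_le _).trans ?_
          rw [if_pos hfi]
          exact (homogeneousComponent_isHomogeneous _ _).totalDegree_le
        omega
      · rw [if_neg hfi]
        simp
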